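/- Let k ≥ 1, and let 𝒳 be a subset of {z ∈ ℂ : Im z > 1}^k ⊆ ℍ^k, where ℍ^k carries the sup of the hyperbolic metrics on the factors. Suppose there are constants C > 0 and c_{j,m} > 0 such that for all (x_j + i y_j)_{j=1}^k and (x'_j + i y'_j)_{j=1}^k in 𝒳 and all indices j, m: (i) y_j / y_m < C, and (ii) | |x_j − x'_j| − c_{j,m}|x_m − x'_m| | ≤ C(y_1 + y'_1). Then there is a constant K, depending only on C, the c_{j,m}, and k, such that each coordinate projection 𝒳 → ℍ is a K-quasi-isometric embedding. -/
import Mathlib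


open UpperHalfPlane Real

set_option maxHeartbeats 1000000

private lemma my_log_le_arsinh {t : ℝ} (ht : 0 ≤ t) : Real.log (1 + t) ≤ Real.arsinh t := by
  rw [Real.arsinh]
  apply Real.log_le_log (by linarith)
  have h1 : (1:ℝ) ≤ √(1 + t ^ 2) := by
    have h := Real.sqrt_le_sqrt (show (1:ℝ) ≤ 1 + t ^ 2 by nlinarith)
    rwa [Real.sqrt_one] at h
  linarith

private lemma my_arsinh_le_log {t : ℝ} (ht : 0 ≤ t) :
    Real.arsinh t ≤ Real.log (1 + 2 * t) := by
  rw [Real.arsinh]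
  have hs : (0:ℝ) < √(1 + t ^ 2) := Real.sqrt_pos.mpr (by nlinarith)
  apply Real.log_le_log (by linarith)
  have h1 : √(1 + t ^ 2) ≤ 1 + t := by
    rw [show (1:ℝ) + t = √((1 + t) ^ 2) from (Real.sqrt_sq (by linarith)).symm]
    exact Real.sqrt_le_sqrt (by nlinarith)
  linarith

private lemma key_poly {C cb cc x x' X X' a b A B a1 b1 : ℝ}
    (hC : 1 < C) (hcc : 0 < cc) (hcb : cc ≤ cb)
    (ha : 0 < a) (hb : 0 < b) (hA : 0 < A) (hB : 0 < B) (ha1 : 0 < a1) (hb1 : 0 < b1)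
    (h1 : A < C * a) (h2 : a < C * A) (h3 : B < C * b) (h4 : b < C * B)
    (h5 : a1 < C * A) (h6 : b1 < C * B)
    (hx : |(|X - X'|) - cc * (|x - x'|)| ≤ C * (a1 + b1)) :
    ((X - X') ^ 2 + (A - B) ^ 2) * (a * b) ≤
      (2 * cb ^ 2 * C ^ 2 + 4 * C ^ 6 + C ^ 2) *
        (((x - x') ^ 2 + (a - b) ^ 2 + 4 * (a * b)) * (A * B)) := by
  have hC0 : (0 : ℝ) < C := by linarith
  have hcb0 : (0 : ℝ) < cb := lt_of_lt_of_le hcc hcb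
  have k1 : A * b ≤ C ^ 2 * (a * B) := by
    linarith [mul_lt_mul'' h1 h4 hA.le hb.le]
  have k2 : B * a ≤ C ^ 2 * (b * A) := by
    linarith [mul_lt_mul'' h3 h2 hB.le ha.le]
  have k3 : a * b ≤ C ^ 2 * (A * B) := by
    linarith [mul_lt_mul'' h2 h4 ha.le hb.le]
  have p1 : A ^ 2 * (a * b) ≤ C ^ 2 * a ^ 2 * (A * B) := by
    linarith [mul_le_mul_of_nonneg_right k1 (mul_nonneg hA.le ha.le)]
  have p2 : B ^ 2 * (a * b) ≤ C ^ 2 * b ^ 2 * (A * B) := by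
    linarith [mul_le_mul_of_nonneg_right k2 (mul_nonneg hB.le hb.le)]
  have e1 : (A - B) ^ 2 * (a * b) ≤ C ^ 2 * (a ^ 2 + b ^ 2) * (A * B) := by
    have hpos : (0:ℝ) ≤ A * B * (a * b) := by positivity
    linarith [p1, p2]
  have k4 : a1 ^ 2 ≤ C ^ 2 * A ^ 2 := by
    linarith [mul_lt_mul'' h5 h5 ha1.le ha1.le]
  have k5 : b1 ^ 2 ≤ C ^ 2 * B ^ 2 := by
    linarith [mul_lt_mul'' h6 h6 hb1.le hb1.le]
  have e2 : (a1 + b1) ^ 2 * (a * b) ≤ 2 * C ^ 4 * (a ^ 2 + b ^ 2) * (A * B) := by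
    have q1 : (a1 + b1) ^ 2 ≤ 2 * C ^ 2 * (A ^ 2 + B ^ 2) := by
      linarith [k4, k5, sq_nonneg (a1 - b1)]
    have q2 := mul_le_mul_of_nonneg_right q1 (mul_pos ha hb).le
    have q3 := mul_le_mul_of_nonneg_left p1 (by positivity : (0:ℝ) ≤ 2 * C ^ 2)
    have q4 := mul_le_mul_of_nonneg_left p2 (by positivity : (0:ℝ) ≤ 2 * C ^ 2)
    linarith [q2, q3, q4]
  have habs : |X - X'| ≤ cb * |x - x'| + C * (a1 + b1) := by
    have h := (abs_le.1 hx).2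
    have h' : cc * |x - x'| ≤ cb * |x - x'| :=
      mul_le_mul_of_nonneg_right hcb (abs_nonneg _)
    linarith
  have e3 : (X - X') ^ 2 ≤ 2 * cb ^ 2 * (x - x') ^ 2 + 2 * C ^ 2 * (a1 + b1) ^ 2 := by
    rw [← sq_abs (X - X'), ← sq_abs (x - x')]
    have hsq := mul_self_le_mul_self (abs_nonneg (X - X')) habs
    linarith [hsq, sq_nonneg (cb * |x - x'| - C * (a1 + b1))]
  have e4 : (x - x') ^ 2 * (a * b) ≤ C ^ 2 * (x - x') ^ 2 * (A * B) := by
    linarith [mul_le_mul_of_nonneg_left k3 (sq_nonneg (x - x'))]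
  have m1 := mul_le_mul_of_nonneg_right e3 (mul_pos ha hb).le
  have m2 := mul_le_mul_of_nonneg_left e4 (by positivity : (0:ℝ) ≤ 2 * cb ^ 2)
  have m3 := mul_le_mul_of_nonneg_left e2 (by positivity : (0:ℝ) ≤ 2 * C ^ 2)
  have g1 : (0:ℝ) ≤ cb ^ 2 * C ^ 2 * ((a - b) ^ 2) * (A * B) := by positivity
  have g2 : (0:ℝ) ≤ cb ^ 2 * C ^ 2 * (a * b) * (A * B) := by positivity
  have g3 : (0:ℝ) ≤ C ^ 2 * ((x - x') ^ 2) * (A * B) := by positivity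
  have g4 : (0:ℝ) ≤ C ^ 6 * ((x - x') ^ 2) * (A * B) := by positivity
  have g5 : (0:ℝ) ≤ C ^ 2 * (a * b) * (A * B) := by positivity
  have g6 : (0:ℝ) ≤ C ^ 6 * (a * b) * (A * B) := by positivity
  linarith [e1, m1, m2, m3, g1, g2, g3, g4, g5, g6]

private lemma key_dist {C cb cc : ℝ} (hC : 1 < C) (hcc : 0 < cc) (hcb : cc ≤ cb)
    (z w z' w' z1 w1 : ℍ)
    (h1 : z'.im < C * z.im) (h2 : z.im < C * z'.im)
    (h3 : w'.im < C * w.im) (h4 : w.im < C * w'.im)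
    (h5 : z1.im < C * z'.im) (h6 : w1.im < C * w'.im)
    (hx : |(|z'.re - w'.re|) - cc * (|z.re - w.re|)| ≤ C * (z1.im + w1.im)) :
    dist z' w' ≤ dist z w +
      2 * Real.log (1 + 2 * (2 * cb ^ 2 * C ^ 2 + 4 * C ^ 6 + C ^ 2 + 1)) := by
  have hcb0 : (0 : ℝ) < cb := lt_of_lt_of_le hcc hcb
  set F : ℝ := 2 * cb ^ 2 * C ^ 2 + 4 * C ^ 6 + C ^ 2 with hF
  have hF0 : 0 < F := by positivity
  set E : ℝ := F + 1 with hE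
  have hE0 : 0 < E := by positivity
  set u : ℝ := dist (z : ℂ) (w : ℂ) / (2 * √(z.im * w.im)) with hu_def
  set v : ℝ := dist (z' : ℂ) (w' : ℂ) / (2 * √(z'.im * w'.im)) with hv_def
  have hzi := z.im_pos
  have hwi := w.im_pos
  have hzi' := z'.im_pos
  have hwi' := w'.im_pos
  have hu : 0 ≤ u := by
    apply div_nonneg dist_nonneg
    positivity
  have hv : 0 ≤ v := by
    apply div_nonneg dist_nonneg
    positivity
  have hu2 : u ^ 2 = ((z.re - w.re) ^ 2 + (z.im - w.im) ^ 2) / (4 * (z.im * w.im)) := by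
    rw [hu_def, div_pow, Complex.dist_eq_re_im, Real.sq_sqrt (by positivity), mul_pow,
      Real.sq_sqrt (by positivity : (0:ℝ) ≤ z.im * w.im)]
    simp [coe_re, coe_im]
    ring_nf
  have hv2 : v ^ 2 = ((z'.re - w'.re) ^ 2 + (z'.im - w'.im) ^ 2) / (4 * (z'.im * w'.im)) := by
    rw [hv_def, div_pow, Complex.dist_eq_re_im, Real.sq_sqrt (by positivity), mul_pow,
      Real.sq_sqrt (by positivity : (0:ℝ) ≤ z'.im * w'.im)]
    simp [coe_re, coe_im]
    ring_nf
  have hpoly := key_poly hC hcc hcb hzi hwi hzi' hwi' z1.im_pos w1.im_pos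
    h1 h2 h3 h4 h5 h6 hx
  rw [← hF] at hpoly
  have step : v ^ 2 ≤ F * (u ^ 2 + 1) := by
    rw [hv2, hu2, div_le_iff₀ (by positivity)]
    have expand : F * (((z.re - w.re) ^ 2 + (z.im - w.im) ^ 2) / (4 * (z.im * w.im)) + 1) *
        (4 * (z'.im * w'.im)) =
        F * ((((z.re - w.re) ^ 2 + (z.im - w.im) ^ 2) + 4 * (z.im * w.im)) *
          (4 * (z'.im * w'.im))) / (4 * (z.im * w.im)) := by
      field_simp
    rw [expand, le_div_iff₀ (by positivity)]
    nlinarith [hpoly]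
  have hv_le : v ≤ E * (u + 1) := by
    have h0 : 0 ≤ E * (u + 1) := by positivity
    have hsq : v ^ 2 ≤ (E * (u + 1)) ^ 2 := by
      have t1 : u ^ 2 + 1 ≤ (u + 1) ^ 2 := by nlinarith [hu]
      have t2 := mul_le_mul_of_nonneg_left t1 hF0.le
      have t3 : F ≤ E ^ 2 := by rw [hE]; nlinarith [hF0]
      have t4 := mul_le_mul_of_nonneg_right t3 (sq_nonneg (u + 1))
      calc v ^ 2 ≤ F * (u ^ 2 + 1) := step
        _ ≤ F * (u + 1) ^ 2 := t2
        _ ≤ E ^ 2 * (u + 1) ^ 2 := t4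
        _ = (E * (u + 1)) ^ 2 := by ring
    calc v = √(v ^ 2) := (Real.sqrt_sq hv).symm
      _ ≤ √((E * (u + 1)) ^ 2) := Real.sqrt_le_sqrt hsq
      _ = E * (u + 1) := Real.sqrt_sq h0
  rw [UpperHalfPlane.dist_eq z' w', UpperHalfPlane.dist_eq z w, ← hu_def, ← hv_def]
  have l1 : Real.arsinh v ≤ Real.log (1 + 2 * v) := my_arsinh_le_log hv
  have l2 : Real.log (1 + u) ≤ Real.arsinh u := my_log_le_arsinh hu
  have l3 : Real.log (1 + 2 * v) ≤ Real.log (1 + 2 * (E * (u + 1))) :=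
    Real.log_le_log (by linarith) (by linarith)
  have l4 : Real.log (1 + 2 * (E * (u + 1))) ≤ Real.log ((1 + 2 * E) * (1 + u)) :=
    Real.log_le_log (by nlinarith) (by nlinarith)
  have l5 : Real.log ((1 + 2 * E) * (1 + u)) = Real.log (1 + 2 * E) + Real.log (1 + u) :=
    Real.log_mul (by positivity) (by positivity)
  linarith

/-- Let `𝒳 ⊆ {Im z > 1}^k ⊆ ℍ^k` (sup metric).  If the imaginary parts of the coordinates
have ratios bounded by `C` and the real-part differences of the coordinates are proportional
(with constants `c j m`) up to an error `C(y₁ + y₁')`, then each coordinate projection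
`𝒳 → ℍ` is a `K`-quasi-isometric embedding, with `K` depending only on `C`, the `c j m`
and `k`. -/
theorem coordinate_projections_qie :
    ∀ (k : ℕ) (hk : 1 ≤ k) (C : ℝ), 0 < C → ∀ c : Fin k → Fin k → ℝ,
      (∀ j m, 0 < c j m) →
      ∃ K : ℝ, 0 < K ∧
        ∀ X : Set (Fin k → UpperHalfPlane),
          (∀ p ∈ X, ∀ j, 1 < (p j).im) →
          (∀ p ∈ X, ∀ q ∈ X, ∀ j m : Fin k,
            (p j).im / (p m).im < C ∧
            |(|(p j).re - (q j).re|) - c j m * (|(p m).re - (q m).re|)| ≤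
              C * ((p ⟨0, hk⟩).im + (q ⟨0, hk⟩).im)) →
          ∀ j : Fin k, ∀ p ∈ X, ∀ q ∈ X,
            dist p q / K - K ≤ dist (p j) (q j) ∧ dist (p j) (q j) ≤ K * dist p q + K := by
  intro k hk C hC0 c hc
  set cb : ℝ := 1 + ∑ j : Fin k, ∑ m : Fin k, c j m with hcb_def
  have hcb_pos : 0 < cb := by
    have : 0 ≤ ∑ j : Fin k, ∑ m : Fin k, c j m :=
      Finset.sum_nonneg fun j _ => Finset.sum_nonneg fun m _ => (hc j m).le
    positivity
  have hcb_ge : ∀ j m : Fin k, c j m ≤ cb := by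
    intro j m
    have h1 : c j m ≤ ∑ m' : Fin k, c j m' :=
      Finset.single_le_sum (fun m' _ => (hc j m').le) (Finset.mem_univ m)
    have h2 : (∑ m' : Fin k, c j m') ≤ ∑ j' : Fin k, ∑ m' : Fin k, c j' m' :=
      Finset.single_le_sum (fun j' _ => Finset.sum_nonneg fun m' _ => (hc j' m').le)
        (Finset.mem_univ j)
    linarith
  set B : ℝ := 2 * Real.log (1 + 2 * (2 * cb ^ 2 * C ^ 2 + 4 * C ^ 6 + C ^ 2 + 1)) with hB_def
  have hB0 : 0 ≤ B := by
    have : (0:ℝ) ≤ Real.log (1 + 2 * (2 * cb ^ 2 * C ^ 2 + 4 * C ^ 6 + C ^ 2 + 1)) := by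
      apply Real.log_nonneg
      nlinarith [sq_nonneg cb, sq_nonneg C, pow_pos hC0 2, pow_pos hC0 6, sq_nonneg (cb * C)]
    linarith
  refine ⟨B + 1, by linarith, ?_⟩
  intro X hX1 hX2 j p hp q hq
  have hC1 : 1 < C := by
    have h := (hX2 p hp p hp j j).1
    rwa [div_self (ne_of_gt (p j).im_pos)] at h
  have him : ∀ (r : Fin k → ℍ) (hr : r ∈ X) (s : Fin k → ℍ) (hs : s ∈ X) (a b : Fin k),
      (r a).im < C * (r b).im := by
    intro r hr s hs a b
    have h := (hX2 r hr s hs a b).1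
    exact (div_lt_iff₀ (r b).im_pos).1 h
  have key : ∀ m : Fin k, dist (p m) (q m) ≤ dist (p j) (q j) + B := by
    intro m
    exact key_dist hC1 (hc m j) (hcb_ge m j) (p j) (q j) (p m) (q m)
      (p ⟨0, hk⟩) (q ⟨0, hk⟩)
      (him p hp q hq m j) (him p hp q hq j m)
      (him q hq p hp m j) (him q hq p hp j m)
      (him p hp q hq ⟨0, hk⟩ m) (him q hq p hp ⟨0, hk⟩ m)
      (hX2 p hp q hq m j).2
  have hd : dist p q ≤ dist (p j) (q j) + B :=
    (dist_pi_le_iff (by have := dist_nonneg (x := p j) (y := q j); linarith)).2 key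
  have hle : dist (p j) (q j) ≤ dist p q := dist_le_pi_dist p q j
  have hdn : 0 ≤ dist p q := dist_nonneg
  constructor
  · have hdiv : dist p q / (B + 1) ≤ dist p q :=
      div_le_self hdn (by linarith)
    linarith
  · nlinarith [hle, hdn, hB0]
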